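/- arXiv:2310.14789 — 2 statements merged into one kernel-verified Lean document; each statement's English description precedes it below -/
import Mathlib

section
/- Let $1 < p, q < \infty$ with $1/p + 1/q = 1$ and let $x, y \in M_n(\mathbb{C})$ with $\|x\|_p = 1$, $\|y\|_q \le 1$, and $\mathrm{tr}(xy) = 1$. Then $y$ is uniquely determined: writing the polar decomposition $x = u|x|$, one has $y = |x|^{p-1} u^*$. -/
open Matrix ComplexOrder

variable {n : ℕ}

/-- The absolute value `|x| = (xᴴx)^{1/2}` of a complex matrix. -/
noncomputable def matAbs (x : Matrix (Fin n) (Fin n) ℂ) : Matrix (Fin n) (Fin n) ℂ :=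
  ((Matrix.posSemidef_conjTranspose_mul_self x).1.eigenvectorUnitary : Matrix (Fin n) (Fin n) ℂ) *
    diagonal ((↑) ∘ Real.sqrt ∘ (Matrix.posSemidef_conjTranspose_mul_self x).1.eigenvalues) *
    (star (Matrix.posSemidef_conjTranspose_mul_self x).1.eigenvectorUnitary : Matrix (Fin n) (Fin n) ℂ)

theorem matAbs_isHermitian (x : Matrix (Fin n) (Fin n) ℂ) : (matAbs x).IsHermitian := by
  have h : matAbs x = (Matrix.posSemidef_conjTranspose_mul_self x).1.cfc Real.sqrt := by
    simp [matAbs, Matrix.IsHermitian.cfc, Unitary.conjStarAlgAut_apply]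
  rw [h, ← Matrix.IsHermitian.cfc_eq]
  exact cfc_predicate _ _

/-- The real power `|x|^r`, defined by functional calculus on `|x|`. -/
noncomputable def matAbsRpow (x : Matrix (Fin n) (Fin n) ℂ) (r : ℝ) :
    Matrix (Fin n) (Fin n) ℂ :=
  (matAbs_isHermitian x).cfc (fun t : ℝ => t ^ r)

/-- The Schatten `p`-norm `(tr |x|^p)^{1/p}` of a complex matrix. -/
noncomputable def schattenNorm (p : ℝ) (x : Matrix (Fin n) (Fin n) ℂ) : ℝ :=
  ((matAbsRpow x p).trace).re ^ (1 / p)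

/-!
Diagonalise `|x| = V diag(s) V*` and `|y| = W diag(t) W*`. Then `T = V* y W` satisfies
`T* T = diag(t²)`, so `T = G diag(t)` with `G` a partial isometry, and `E = W* u V` is a partial
isometry as well; rows and columns of a partial isometry have norm at most `1`. Now
`tr(xy) = ∑ᵢⱼ sᵢ tⱼ Gᵢⱼ Eⱼᵢ`, and Young's inequality together with AM-GM bounds each real part by
`(sᵢ^p/p + tⱼ^q/q) (|Gᵢⱼ|² + |Eⱼᵢ|²)/2`, a family summing to at most `1/p + 1/q = 1`.
So `tr(xy) = 1` forces equality in every term, i.e. `tⱼ Gᵢⱼ = sᵢ^(p-1) conj Eⱼᵢ`, which says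
`V* y W = diag(s^(p-1)) V* u* W`, that is `y = |x|^(p-1) u*`.
-/

open ComplexConjugate

namespace Real

theorem eq_rpow_sub_one_of_mul_eq {a b p q : ℝ} (ha : 0 ≤ a) (hb : 0 ≤ b)
    (hpq : p.HolderConjugate q) (h : a * b = a ^ p / p + b ^ q / q) : b = a ^ (p - 1) := by
  have hab : a ^ p = b ^ q := (young_inequality_eq_iff_of_nonneg ha hb hpq).1 h
  calc b = (b ^ q) ^ q⁻¹ := (rpow_rpow_inv hb hpq.symm.ne_zero).symm
    _ = a ^ (p - 1) := by
      rw [← hab, ← rpow_mul ha, ← div_eq_mul_inv, hpq.div_conj_eq_sub_one]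

end Real

namespace RCLike

variable {𝕜 : Type*} [RCLike 𝕜]

theorem norm_sub_conj_sq (c d : 𝕜) :
    ‖c - conj d‖ ^ 2 = ‖c‖ ^ 2 + ‖d‖ ^ 2 - 2 * re (c * d) := by
  rw [@norm_sub_sq 𝕜 𝕜, inner_apply, norm_conj, ← map_mul, conj_re, mul_comm d c]
  ring

theorem re_mul_le (c d : 𝕜) : re (c * d) ≤ (‖c‖ ^ 2 + ‖d‖ ^ 2) / 2 := by
  nlinarith [norm_sub_conj_sq c d, sq_nonneg ‖c - conj d‖]

theorem eq_conj_of_re_mul_eq {c d : 𝕜} (h : re (c * d) = (‖c‖ ^ 2 + ‖d‖ ^ 2) / 2) :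
    c = conj d := by
  have : ‖c - conj d‖ ^ 2 = 0 := by rw [norm_sub_conj_sq, h]; ring
  simpa [sub_eq_zero] using this

variable {p q a b : ℝ}

theorem mul_mul_re_mul_le (hpq : p.HolderConjugate q) (ha : 0 ≤ a) (hb : 0 ≤ b) (c d : 𝕜) :
    a * b * re (c * d) ≤ (a ^ p / p + b ^ q / q) * ((‖c‖ ^ 2 + ‖d‖ ^ 2) / 2) := by
  have hs : 0 ≤ (‖c‖ ^ 2 + ‖d‖ ^ 2) / 2 := by positivity
  calc a * b * re (c * d) ≤ a * b * ((‖c‖ ^ 2 + ‖d‖ ^ 2) / 2) :=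
        mul_le_mul_of_nonneg_left (re_mul_le c d) (mul_nonneg ha hb)
    _ ≤ _ := mul_le_mul_of_nonneg_right (Real.young_inequality_of_nonneg ha hb hpq) hs

theorem mul_eq_rpow_mul_conj_of_mul_mul_re_mul_eq (hpq : p.HolderConjugate q) (ha : 0 ≤ a)
    (hb : 0 ≤ b) {c d : 𝕜}
    (h : a * b * re (c * d) = (a ^ p / p + b ^ q / q) * ((‖c‖ ^ 2 + ‖d‖ ^ 2) / 2)) :
    c * b = (a ^ (p - 1) : ℝ) * conj d := by
  set s := (‖c‖ ^ 2 + ‖d‖ ^ 2) / 2 with hs_def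
  rcases (show 0 ≤ s by positivity).eq_or_lt with hs | hs
  · have hc : ‖c‖ ^ 2 = 0 := by nlinarith [sq_nonneg ‖c‖, sq_nonneg ‖d‖]
    have hd : ‖d‖ ^ 2 = 0 := by nlinarith [sq_nonneg ‖c‖, sq_nonneg ‖d‖]
    rw [sq_eq_zero_iff, norm_eq_zero] at hc hd
    simp [hc, hd]
  have h₁ : a * b * re (c * d) ≤ a * b * s :=
    mul_le_mul_of_nonneg_left (re_mul_le c d) (mul_nonneg ha hb)
  have h₂ : a * b * s ≤ (a ^ p / p + b ^ q / q) * s :=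
    mul_le_mul_of_nonneg_right (Real.young_inequality_of_nonneg ha hb hpq) hs.le
  have hb_eq : b = a ^ (p - 1) :=
    Real.eq_rpow_sub_one_of_mul_eq ha hb hpq (mul_right_cancel₀ hs.ne' (by linarith))
  rw [← hb_eq]
  rcases hb.eq_or_lt with rfl | hb_pos
  · simp
  have ha_pos : 0 < a := by
    refine ha.lt_of_ne' fun ha0 => hb_pos.ne' ?_
    rw [hb_eq, ha0, Real.zero_rpow hpq.sub_one_ne_zero]
  have hcd : a * b * re (c * d) = a * b * s := by linarith
  rw [eq_conj_of_re_mul_eq (mul_left_cancel₀ (mul_pos ha_pos hb_pos).ne' hcd), mul_comm]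

end RCLike

theorem Finset.sum_sum_add_mul_le {m n : Type*} [Fintype m] [Fintype n] {a : m → ℝ} {b : n → ℝ}
    {w : m → n → ℝ} (ha : ∀ i, 0 ≤ a i) (hb : ∀ j, 0 ≤ b j) (hrow : ∀ i, ∑ j, w i j ≤ 1)
    (hcol : ∀ j, ∑ i, w i j ≤ 1) :
    ∑ i, ∑ j, (a i + b j) * w i j ≤ ∑ i, a i + ∑ j, b j :=
  calc ∑ i, ∑ j, (a i + b j) * w i j = ∑ i, a i * ∑ j, w i j + ∑ j, b j * ∑ i, w i j := by
        simp only [add_mul, Finset.sum_add_distrib, Finset.mul_sum]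
        rw [Finset.sum_comm (f := fun i j => b j * w i j)]
    _ ≤ ∑ i, a i * 1 + ∑ j, b j * 1 := by
        gcongr with i _ j _
        · exact ha i
        · exact hrow i
        · exact hb j
        · exact hcol j
    _ = ∑ i, a i + ∑ j, b j := by simp

namespace Matrix

variable {m n 𝕜 : Type*} [Fintype m] [RCLike 𝕜]

theorem re_conjTranspose_mul_self_apply (A : Matrix m n 𝕜) (j : n) :
    RCLike.re ((Aᴴ * A) j j) = ∑ i, ‖A i j‖ ^ 2 := by
  simp only [mul_apply, conjTranspose_apply, RCLike.star_def, RCLike.conj_mul, map_sum,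
    ← RCLike.ofReal_pow, RCLike.ofReal_re]

variable [Fintype n]

def IsPartialIsometry (A : Matrix m n 𝕜) : Prop := A * Aᴴ * A = A

theorem re_apply_self_le_one_of_isIdempotentElem {P : Matrix n n 𝕜} (hP : P.IsHermitian)
    (hPP : IsIdempotentElem P) (j : n) : RCLike.re (P j j) ≤ 1 := by
  have hsum : RCLike.re (P j j) = ∑ i, ‖P i j‖ ^ 2 := by
    rw [← re_conjTranspose_mul_self_apply, hP.eq, hPP.eq]
  have hjj : ‖P j j‖ ^ 2 ≤ RCLike.re (P j j) :=
    hsum ▸ Finset.single_le_sum (fun i _ => sq_nonneg ‖P i j‖) (Finset.mem_univ j)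
  nlinarith [RCLike.re_le_norm (P j j), norm_nonneg (P j j)]

theorem isPartialIsometry_iff_isIdempotentElem {A : Matrix m n 𝕜} :
    A.IsPartialIsometry ↔ IsIdempotentElem (Aᴴ * A) := by
  constructor
  · intro hA
    calc Aᴴ * A * (Aᴴ * A) = Aᴴ * (A * Aᴴ * A) := by simp only [Matrix.mul_assoc]
      _ = Aᴴ * A := by rw [hA]
  · intro h
    have h' : Aᴴ * A * Aᴴ * A = Aᴴ * A := by rw [Matrix.mul_assoc (Aᴴ * A)]; exact h.eq
    have hD : (A * Aᴴ * A - A)ᴴ * (A * Aᴴ * A - A) = 0 := by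
      simp only [conjTranspose_sub, conjTranspose_mul, conjTranspose_conjTranspose,
        Matrix.sub_mul, Matrix.mul_sub, ← Matrix.mul_assoc, h']
      abel
    exact sub_eq_zero.1 (conjTranspose_mul_self_eq_zero.1 hD)

namespace IsPartialIsometry

variable {A : Matrix m n 𝕜}

theorem conjTranspose (hA : A.IsPartialIsometry) : Aᴴ.IsPartialIsometry :=
  calc Aᴴ * Aᴴᴴ * Aᴴ = (A * Aᴴ * A)ᴴ := by
        simp only [conjTranspose_mul, conjTranspose_conjTranspose, Matrix.mul_assoc]
    _ = Aᴴ := by rw [hA]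

theorem sum_norm_sq_apply_left_le_one (hA : A.IsPartialIsometry) (j : n) :
    ∑ i, ‖A i j‖ ^ 2 ≤ 1 := by
  classical
  rw [← re_conjTranspose_mul_self_apply]
  exact re_apply_self_le_one_of_isIdempotentElem (isHermitian_conjTranspose_mul_self A)
    (isPartialIsometry_iff_isIdempotentElem.1 hA) j

theorem sum_norm_sq_apply_right_le_one (hA : A.IsPartialIsometry) (i : m) :
    ∑ j, ‖A i j‖ ^ 2 ≤ 1 := by
  simpa [norm_star] using hA.conjTranspose.sum_norm_sq_apply_left_le_one i

theorem unitary_mul_mul_unitary [DecidableEq m] [DecidableEq n] {U : Matrix m m 𝕜}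
    {V : Matrix n n 𝕜} (hU : Uᴴ * U = 1) (hV : V * Vᴴ = 1) (hA : A.IsPartialIsometry) :
    (U * A * V).IsPartialIsometry :=
  calc U * A * V * (U * A * V)ᴴ * (U * A * V)
      = U * (A * (V * Vᴴ) * Aᴴ * (Uᴴ * U) * A) * V := by
        simp only [conjTranspose_mul, Matrix.mul_assoc]
    _ = U * A * V := by rw [hU, hV, Matrix.mul_one, Matrix.mul_one, hA, Matrix.mul_assoc]

end IsPartialIsometry

theorem exists_isPartialIsometry_mul_diagonal [DecidableEq n] {T : Matrix m n 𝕜} {b : n → ℝ}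
    (hT : Tᴴ * T = diagonal (fun j => (b j : 𝕜) ^ 2)) :
    ∃ G : Matrix m n 𝕜, G.IsPartialIsometry ∧ T = G * diagonal (fun j => (b j : 𝕜)) := by
  -- `(b j)⁻¹ = 0` where `b j = 0`, so `Gᴴ * G` is the projection onto the support of `b`.
  set G := T * diagonal (fun j => ((b j)⁻¹ : 𝕜))
  have hGG : Gᴴ * G = diagonal (fun j => if b j = 0 then 0 else 1) := by
    simp only [G, conjTranspose_mul, diagonal_conjTranspose, Matrix.mul_assoc]
    rw [← Matrix.mul_assoc Tᴴ, hT, diagonal_mul_diagonal, diagonal_mul_diagonal]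
    congr 1
    funext j
    split_ifs with hb
    · simp [hb]
    · have hb' : (b j : 𝕜) ≠ 0 := RCLike.ofReal_ne_zero.2 hb
      simp only [Pi.star_apply, RCLike.star_def, map_inv₀, RCLike.conj_ofReal]
      field_simp
  refine ⟨G, ?_, ?_⟩
  · rw [isPartialIsometry_iff_isIdempotentElem, hGG, IsIdempotentElem, diagonal_mul_diagonal]
    congr 1
    funext j
    split_ifs <;> simp
  · ext i j
    simp only [G, mul_diagonal]
    by_cases hb : b j = 0
    · have hcol : ∑ k, ‖T k j‖ ^ 2 = 0 := by
        rw [← re_conjTranspose_mul_self_apply, hT, diagonal_apply_eq, hb]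
        simp
      have hT0 : T i j = 0 := by
        simpa using (Finset.sum_eq_zero_iff_of_nonneg (fun k _ => sq_nonneg ‖T k j‖)).1 hcol i
          (Finset.mem_univ i)
      simp [hT0]
    · have hb' : (b j : 𝕜) ≠ 0 := RCLike.ofReal_ne_zero.2 hb
      field_simp

variable [DecidableEq m] [DecidableEq n]

theorem re_trace_diagonal_mul_mul_diagonal_mul (a : m → ℝ) (G : Matrix m n 𝕜) (b : n → ℝ)
    (E : Matrix n m 𝕜) :
    RCLike.re (diagonal (fun i => (a i : 𝕜)) * G * diagonal (fun j => (b j : 𝕜)) * E).trace =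
      ∑ i, ∑ j, a i * b j * RCLike.re (G i j * E j i) := by
  simp only [trace, diag, mul_apply (N := E), mul_diagonal, diagonal_mul, map_sum]
  refine Finset.sum_congr rfl fun i _ => Finset.sum_congr rfl fun j _ => ?_
  rw [show (a i : 𝕜) * G i j * b j * E j i = ((a i * b j : ℝ) : 𝕜) * (G i j * E j i) by
    push_cast; ring, RCLike.re_ofReal_mul]

theorem IsPartialIsometry.mul_diagonal_eq_of_one_le_re_trace {p q : ℝ}
    (hpq : p.HolderConjugate q) {a : m → ℝ} {b : n → ℝ} (ha : ∀ i, 0 ≤ a i) (hb : ∀ j, 0 ≤ b j)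
    (ha_sum : ∑ i, a i ^ p ≤ 1) (hb_sum : ∑ j, b j ^ q ≤ 1) {G : Matrix m n 𝕜}
    {E : Matrix n m 𝕜} (hG : G.IsPartialIsometry) (hE : E.IsPartialIsometry)
    (htr : 1 ≤ RCLike.re
      (diagonal (fun i => (a i : 𝕜)) * G * diagonal (fun j => (b j : 𝕜)) * E).trace) :
    G * diagonal (fun j => (b j : 𝕜)) = diagonal (fun i => ((a i ^ (p - 1) : ℝ) : 𝕜)) * Eᴴ := by
  set w : m → n → ℝ := fun i j => (‖G i j‖ ^ 2 + ‖E j i‖ ^ 2) / 2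
  set f : m → n → ℝ := fun i j => a i * b j * RCLike.re (G i j * E j i)
  set g : m → n → ℝ := fun i j => (a i ^ p / p + b j ^ q / q) * w i j
  have hfg : ∀ i j, f i j ≤ g i j := fun i j =>
    RCLike.mul_mul_re_mul_le hpq (ha i) (hb j) (G i j) (E j i)
  have hg : ∑ i, ∑ j, g i j ≤ 1 := by
    have hw_row : ∀ i, ∑ j, w i j ≤ 1 := fun i => by
      simp only [w, ← Finset.sum_div, Finset.sum_add_distrib]
      linarith [hG.sum_norm_sq_apply_right_le_one i, hE.sum_norm_sq_apply_left_le_one i]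
    have hw_col : ∀ j, ∑ i, w i j ≤ 1 := fun j => by
      simp only [w, ← Finset.sum_div, Finset.sum_add_distrib]
      linarith [hG.sum_norm_sq_apply_left_le_one j, hE.sum_norm_sq_apply_right_le_one j]
    calc ∑ i, ∑ j, g i j ≤ ∑ i, a i ^ p / p + ∑ j, b j ^ q / q :=
          Finset.sum_sum_add_mul_le (fun i => div_nonneg (Real.rpow_nonneg (ha i) p) hpq.nonneg)
            (fun j => div_nonneg (Real.rpow_nonneg (hb j) q) hpq.symm.nonneg) hw_row hw_col
      _ ≤ 1 / p + 1 / q := by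
          simp only [← Finset.sum_div]
          gcongr
          exacts [hpq.nonneg, hpq.symm.nonneg]
      _ = 1 := by simpa only [one_div] using hpq.inv_add_inv_eq_one
  have hsum : ∑ i, ∑ j, f i j = ∑ i, ∑ j, g i j := by
    refine le_antisymm (Finset.sum_le_sum fun i _ => Finset.sum_le_sum fun j _ => hfg i j) ?_
    rw [← re_trace_diagonal_mul_mul_diagonal_mul]
    exact hg.trans htr
  have hfg_eq : ∀ i j, f i j = g i j := fun i j =>
    (Finset.sum_eq_sum_iff_of_le fun j _ => hfg i j).1
      ((Finset.sum_eq_sum_iff_of_le fun i _ => Finset.sum_le_sum fun j _ => hfg i j).1 hsum i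
        (Finset.mem_univ i)) j (Finset.mem_univ j)
  ext i j
  rw [mul_diagonal, diagonal_mul, conjTranspose_apply, RCLike.star_def]
  exact RCLike.mul_eq_rpow_mul_conj_of_mul_mul_re_mul_eq hpq (ha i) (hb j) (hfg_eq i j)

theorem eq_of_one_le_re_trace_mul {p q : ℝ} (hpq : p.HolderConjugate q)
    {x y u V W : Matrix n n 𝕜} {s t : n → ℝ} (hV : V ∈ unitaryGroup n 𝕜)
    (hW : W ∈ unitaryGroup n 𝕜) (hs : ∀ i, 0 ≤ s i) (ht : ∀ j, 0 ≤ t j)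
    (hs_sum : ∑ i, s i ^ p ≤ 1) (ht_sum : ∑ j, t j ^ q ≤ 1) (hu : u.IsPartialIsometry)
    (hx : x = u * (V * diagonal (fun i => (s i : 𝕜)) * Vᴴ))
    (hy : yᴴ * y = W * diagonal (fun j => (t j : 𝕜) ^ 2) * Wᴴ)
    (htr : 1 ≤ RCLike.re (x * y).trace) :
    y = V * diagonal (fun i => ((s i ^ (p - 1) : ℝ) : 𝕜)) * Vᴴ * uᴴ := by
  have hV₁ : Vᴴ * V = 1 := mem_unitaryGroup_iff'.1 hV
  have hV₂ : V * Vᴴ = 1 := mem_unitaryGroup_iff.1 hV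
  have hW₁ : Wᴴ * W = 1 := mem_unitaryGroup_iff'.1 hW
  have hW₂ : W * Wᴴ = 1 := mem_unitaryGroup_iff.1 hW
  have hT : (Vᴴ * y * W)ᴴ * (Vᴴ * y * W) = diagonal (fun j => (t j : 𝕜) ^ 2) := by
    calc (Vᴴ * y * W)ᴴ * (Vᴴ * y * W) = Wᴴ * (yᴴ * y) * W := by
          simp only [conjTranspose_mul, conjTranspose_conjTranspose, Matrix.mul_assoc]
          rw [← Matrix.mul_assoc V, hV₂, Matrix.one_mul]
      _ = _ := by
          rw [hy, ← Matrix.mul_assoc, ← Matrix.mul_assoc, hW₁, Matrix.one_mul, Matrix.mul_assoc,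
            hW₁, Matrix.mul_one]
  obtain ⟨G, hG, hGT⟩ := exists_isPartialIsometry_mul_diagonal hT
  have hE : (Wᴴ * u * V).IsPartialIsometry :=
    hu.unitary_mul_mul_unitary (by rwa [conjTranspose_conjTranspose]) hV₂
  have htrace : (diagonal (fun i => (s i : 𝕜)) * G * diagonal (fun j => (t j : 𝕜)) *
      (Wᴴ * u * V)).trace = (x * y).trace := by
    calc _ = (diagonal (fun i => (s i : 𝕜)) * Vᴴ * (y * u) * V).trace := by
          rw [Matrix.mul_assoc _ G, ← hGT]
          simp only [Matrix.mul_assoc]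
          rw [← Matrix.mul_assoc W, hW₂, Matrix.one_mul]
      _ = (x * y).trace := by
          rw [hx, Matrix.mul_assoc u, trace_mul_comm u, trace_mul_comm _ V]
          simp only [Matrix.mul_assoc]
  have hkey := hG.mul_diagonal_eq_of_one_le_re_trace hpq hs ht hs_sum ht_sum hE (htrace ▸ htr)
  calc y = V * (Vᴴ * y * W) * Wᴴ := by
        simp only [Matrix.mul_assoc]
        rw [hW₂, Matrix.mul_one, ← Matrix.mul_assoc, hV₂, Matrix.one_mul]
    _ = _ := by
        rw [hGT, hkey]
        simp only [conjTranspose_mul, conjTranspose_conjTranspose, Matrix.mul_assoc]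
        rw [hW₂, Matrix.mul_one]

theorem IsHermitian.eq_mul_diagonal_mul {A : Matrix n n 𝕜} (hA : A.IsHermitian) :
    A = (hA.eigenvectorUnitary : Matrix n n 𝕜) * diagonal (fun i => (hA.eigenvalues i : 𝕜)) *
      (hA.eigenvectorUnitary : Matrix n n 𝕜)ᴴ :=
  hA.spectral_theorem

theorem IsHermitian.mul_self_eq_mul_diagonal_mul {A : Matrix n n 𝕜} (hA : A.IsHermitian) :
    A * A = (hA.eigenvectorUnitary : Matrix n n 𝕜) *
      diagonal (fun i => (hA.eigenvalues i : 𝕜) ^ 2) * (hA.eigenvectorUnitary : Matrix n n 𝕜)ᴴ := by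
  conv_lhs => rw [hA.eq_mul_diagonal_mul]
  simp only [Matrix.mul_assoc]
  rw [← Matrix.mul_assoc _ (hA.eigenvectorUnitary : Matrix n n 𝕜), ← star_eq_conjTranspose,
    Unitary.coe_star_mul_self, Matrix.one_mul, ← Matrix.mul_assoc (diagonal _),
    diagonal_mul_diagonal]
  simp only [sq]

theorem IsHermitian.cfc_eq_mul_diagonal_mul {A : Matrix n n 𝕜} (hA : A.IsHermitian) (f : ℝ → ℝ) :
    hA.cfc f = (hA.eigenvectorUnitary : Matrix n n 𝕜) *
      diagonal (fun i => (f (hA.eigenvalues i) : 𝕜)) * (hA.eigenvectorUnitary : Matrix n n 𝕜)ᴴ :=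
  rfl

theorem PosSemidef.nonneg_of_mem_spectrum_real {A : Matrix n n 𝕜} (hA : A.PosSemidef) {t : ℝ}
    (ht : t ∈ spectrum ℝ A) : 0 ≤ t := by
  rw [hA.isHermitian.spectrum_real_eq_range_eigenvalues] at ht
  obtain ⟨i, rfl⟩ := ht
  exact hA.eigenvalues_nonneg i

theorem IsHermitian.trace_cfc {A : Matrix n n 𝕜} (hA : A.IsHermitian) (f : ℝ → ℝ) :
    (hA.cfc f).trace = ∑ i, (f (hA.eigenvalues i) : 𝕜) := by
  rw [hA.cfc_eq_mul_diagonal_mul, trace_mul_cycle, ← star_eq_conjTranspose,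
    Unitary.coe_star_mul_self, Matrix.one_mul, trace_diagonal]

end Matrix

theorem matAbs_eq_cfc (x : Matrix (Fin n) (Fin n) ℂ) : matAbs x = cfc Real.sqrt (xᴴ * x) := by
  rw [(isHermitian_conjTranspose_mul_self x).cfc_eq]
  simp [matAbs, IsHermitian.cfc, Unitary.conjStarAlgAut_apply]

theorem matAbs_mul_self (x : Matrix (Fin n) (Fin n) ℂ) : matAbs x * matAbs x = xᴴ * x := by
  rw [matAbs_eq_cfc, ← cfc_mul Real.sqrt Real.sqrt (xᴴ * x)]
  conv_rhs => rw [← cfc_id' ℝ (xᴴ * x) (isHermitian_conjTranspose_mul_self x).isSelfAdjoint]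
  exact cfc_congr fun t ht =>
    Real.mul_self_sqrt ((posSemidef_conjTranspose_mul_self x).nonneg_of_mem_spectrum_real ht)

theorem eigenvalues_matAbs_nonneg (x : Matrix (Fin n) (Fin n) ℂ) (i : Fin n) :
    0 ≤ (matAbs_isHermitian x).eigenvalues i := by
  have hi : (matAbs_isHermitian x).eigenvalues i ∈ spectrum ℝ (cfc Real.sqrt (xᴴ * x)) := by
    rw [← matAbs_eq_cfc]
    exact (matAbs_isHermitian x).eigenvalues_mem_spectrum_real i
  obtain ⟨t, -, ht⟩ :=
    cfc_map_spectrum Real.sqrt (xᴴ * x) (isHermitian_conjTranspose_mul_self x).isSelfAdjoint ▸ hi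
  exact ht ▸ Real.sqrt_nonneg t

theorem sum_rpow_eigenvalues_matAbs_le_one {p : ℝ} (hp : 0 < p) {x : Matrix (Fin n) (Fin n) ℂ}
    (hx : schattenNorm p x ≤ 1) : ∑ i, (matAbs_isHermitian x).eigenvalues i ^ p ≤ 1 := by
  have hsum : 0 ≤ ∑ i, (matAbs_isHermitian x).eigenvalues i ^ p :=
    Finset.sum_nonneg fun i _ => Real.rpow_nonneg (eigenvalues_matAbs_nonneg x i) p
  have htrace : (matAbsRpow x p).trace.re = ∑ i, (matAbs_isHermitian x).eigenvalues i ^ p := by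
    simp [matAbsRpow, IsHermitian.trace_cfc]
  rwa [schattenNorm, htrace, one_div, Real.rpow_inv_le_iff_of_pos hsum zero_le_one hp,
    Real.one_rpow] at hx

theorem stmt5_general (p q : ℝ) (hp : 1 < p) (hpq : 1 / p + 1 / q = 1)
    (x u y : Matrix (Fin n) (Fin n) ℂ)
    (hpolar : x = u * matAbs x)
    (hpartial : u * uᴴ * u = u)
    (hx : schattenNorm p x = 1)
    (hy : schattenNorm q y ≤ 1)
    (htr : (x * y).trace = 1) :
    y = matAbsRpow x (p - 1) * uᴴ := by
  have hpq' : p.HolderConjugate q :=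
    Real.holderConjugate_iff.2 ⟨hp, by simpa only [one_div] using hpq⟩
  have hyy : yᴴ * y = _ := (matAbs_mul_self y).symm.trans
    (matAbs_isHermitian y).mul_self_eq_mul_diagonal_mul
  rw [(matAbs_isHermitian x).eq_mul_diagonal_mul] at hpolar
  rw [matAbsRpow, IsHermitian.cfc_eq_mul_diagonal_mul]
  exact eq_of_one_le_re_trace_mul hpq' (matAbs_isHermitian x).eigenvectorUnitary.2
    (matAbs_isHermitian y).eigenvectorUnitary.2 (eigenvalues_matAbs_nonneg x)
    (eigenvalues_matAbs_nonneg y) (sum_rpow_eigenvalues_matAbs_le_one hpq'.pos hx.le)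
    (sum_rpow_eigenvalues_matAbs_le_one hpq'.symm.pos hy) hpartial hpolar hyy (by simp [htr])

/-- Smoothness of the Schatten `p`-norm: the norming functional of a unit vector `x`
is unique, and equals `|x|^{p-1} u^*` where `x = u|x|` is the polar decomposition. -/
theorem stmt5 (p q : ℝ) (hp : 1 < p) (hq : 1 < q) (hpq : 1 / p + 1 / q = 1)
    (x u y : Matrix (Fin n) (Fin n) ℂ)
    (hpolar : x = u * matAbs x)
    (hpartial : u * uᴴ * u = u)
    (hker : ∀ v : Fin n → ℂ, u.mulVec v = 0 ↔ (matAbs x).mulVec v = 0)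
    (hx : schattenNorm p x = 1)
    (hy : schattenNorm q y ≤ 1)
    (htr : (x * y).trace = 1) :
    y = matAbsRpow x (p - 1) * uᴴ :=
  stmt5_general p q hp hpq x u y hpolar hpartial hx hy htr
end

section
/- Let $(m_{ij})_{i,j \in I}$ be a family of complex numbers indexed by an arbitrary set $I$ such that $(m_{ij})_{i,j \in F}$ is positive semi-definite with unit diagonal for every finite $F \subseteq I$, and suppose for each finite $F$ there are a finite-dimensional $C^*$-algebra $A_F$ with tracial state $\tau_F$ and unitaries $(d_{i,F})_{i \in F}$ realizing $m_{ij} = \tau_F(d_{i,F}^* d_{j,F})$ on $F$. Then, via an ultraproduct over the net of finite subsets of $I$ with respect to a nontrivial ultrafilter $\mathcal{F}$, there exist a $C^*$-algebra $B/\mathcal{I}_{\mathcal{F}}$ with a tracial state $\tau_{\mathcal{F}}$ and unitaries $(d_i)_{i \in I}$ such that $m_{ij} = \tau_{\mathcal{F}}(d_i^* d_j)$ for all $i, j \in I$. -/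
open ComplexOrder

/-- A unital C*-algebra bundled with a tracial state. -/
structure TracialCStarAlg where
  carrier : Type
  [instNormedRing : NormedRing carrier]
  [instStarRing : StarRing carrier]
  [instCStarRing : CStarRing carrier]
  [instNormedAlgebra : NormedAlgebra ℂ carrier]
  [instCompleteSpace : CompleteSpace carrier]
  [instStarModule : StarModule ℂ carrier]
  τ : carrier →ₗ[ℂ] ℂ
  τ_one : τ 1 = 1
  τ_pos : ∀ a, 0 ≤ τ (star a * a)
  τ_tracial : ∀ a b, τ (a * b) = τ (b * a)

attribute [instance] TracialCStarAlg.instNormedRing TracialCStarAlg.instStarRing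
  TracialCStarAlg.instCStarRing TracialCStarAlg.instNormedAlgebra
  TracialCStarAlg.instCompleteSpace TracialCStarAlg.instStarModule

/-!
Extend each `d F i` by `1` for `i ∉ F` to get bounded families of unitaries, i.e. unitaries of
the `ℓ^∞`-product of the `A F`. The traces `τ F` are states, hence uniformly bounded
(`‖τ F a‖ ≤ 4 ‖a‖`), so their limit along an ultrafilter finer than `atTop` exists and is a tracial
state on the product. Every pair `{i, j}` is eventually contained in `F`, where
`τ F (star (d F i) * d F j) = m i j`, so the limit trace realizes `m`.
-/

open Filter Topology
open scoped ENNReal NNReal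

lemma map_nonneg_of_map_star_mul_self_nonneg {R M F : Type*} [NonUnitalSemiring R]
    [PartialOrder R] [StarRing R] [StarOrderedRing R] [AddCommMonoid M] [PartialOrder M]
    [IsOrderedAddMonoid M] [FunLike F R M] [AddMonoidHomClass F R M] (f : F)
    (hf : ∀ s, 0 ≤ f (star s * s)) {x : R} (hx : 0 ≤ x) : 0 ≤ f x := by
  rw [StarOrderedRing.nonneg_iff] at hx
  induction hx using AddSubmonoid.closure_induction with
  | mem y hy => obtain ⟨s, rfl⟩ := hy; exact hf s
  | zero => simp
  | add y z _ _ hy hz => rw [map_add]; exact add_nonneg hy hz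

section StateBound

variable {X : Type*} [NormedRing X] [StarRing X] [CStarRing X] [NormedAlgebra ℂ X]
  [CompleteSpace X] [StarModule ℂ X]

variable (X) in
abbrev CStarAlgebra.ofCStarRing : CStarAlgebra X :=
  { ‹NormedRing X›, ‹StarRing X›, ‹CStarRing X›, ‹NormedAlgebra ℂ X›, ‹CompleteSpace X›,
    ‹StarModule ℂ X› with }

lemma norm_apply_le_of_map_star_mul_self_nonneg (φ : X →ₗ[ℂ] ℂ)
    (hφ : ∀ s, 0 ≤ φ (star s * s)) (a : X) : ‖φ a‖ ≤ 4 * ‖φ 1‖ * ‖a‖ := by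
  let := CStarAlgebra.ofCStarRing X
  let := CStarAlgebra.spectralOrder X
  have := CStarAlgebra.spectralOrderedRing X
  let f : X →ₚ[ℂ] ℂ := .mk₀ φ fun _ => map_nonneg_of_map_star_mul_self_nonneg φ hφ
  obtain ⟨y, hy_nonneg, hy_norm, hy⟩ := CStarAlgebra.exists_sum_four_nonneg a
  calc ‖φ a‖ = ‖∑ k : Fin 4, Complex.I ^ (k : ℕ) * f (y k)‖ := by
        conv_lhs => rw [hy]
        simp only [map_sum, map_smul, smul_eq_mul]
        rfl
    _ ≤ ∑ k : Fin 4, ‖φ 1‖ * ‖a‖ := by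
        refine (norm_sum_le _ _).trans (Finset.sum_le_sum fun k _ => ?_)
        rw [norm_mul, norm_pow, Complex.norm_I, one_pow, one_mul]
        exact (f.norm_apply_le_of_nonneg _ (hy_nonneg k)).trans
          (mul_le_mul_of_nonneg_left (hy_norm k) (norm_nonneg _))
    _ = 4 * ‖φ 1‖ * ‖a‖ := by simp [mul_assoc]

end StateBound

lemma Ultrafilter.exists_tendsto_of_forall_mem_isCompact {α X : Type*} [TopologicalSpace X]
    (U : Ultrafilter α) {f : α → X} {K : Set X} (hK : IsCompact K) (hf : ∀ a, f a ∈ K) :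
    ∃ x, Tendsto f U (𝓝 x) := by
  obtain ⟨x, -, hx⟩ :=
    hK.ultrafilter_le_nhds (U.map f) (le_principal_iff.mpr (mem_map.mpr (univ_mem' hf)))
  exact ⟨x, hx⟩

namespace lp

variable {ι 𝕜 : Type*} [RCLike 𝕜] {E : ι → Type*} [∀ i, NormedAddCommGroup (E i)]
  [∀ i, NormedSpace 𝕜 (E i)] (U : Ultrafilter ι) {τ : ∀ i, E i →ₗ[𝕜] 𝕜} {C : ℝ≥0}

lemma exists_tendsto_ultrafilter_apply (hτ : ∀ i a, ‖τ i a‖ ≤ C * ‖a‖) (x : lp E ∞) :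
    ∃ z, Tendsto (fun i => τ i (x i)) U (𝓝 z) :=
  U.exists_tendsto_of_forall_mem_isCompact (isCompact_closedBall 0 (C * ‖x‖)) fun i => by
    rw [mem_closedBall_zero_iff]
    exact (hτ i (x i)).trans (by gcongr; exact norm_apply_le_norm ENNReal.top_ne_zero x i)

noncomputable def ultralimitFunctional (hτ : ∀ i a, ‖τ i a‖ ≤ C * ‖a‖) : lp E ∞ →ₗ[𝕜] 𝕜 :=
  have lim (x : lp E ∞) := tendsto_nhds_limUnder (exists_tendsto_ultrafilter_apply U hτ x)
  { toFun x := limUnder (U : Filter ι) fun i => τ i (x i)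
    map_add' x y := tendsto_nhds_unique (lim _) (((lim x).add (lim y)).congr fun i => by simp)
    map_smul' c x :=
      tendsto_nhds_unique (lim _) (((lim x).const_mul c).congr fun i => by simp) }

variable (hτ : ∀ i a, ‖τ i a‖ ≤ C * ‖a‖)

lemma tendsto_ultralimitFunctional (x : lp E ∞) :
    Tendsto (fun i => τ i (x i)) U (𝓝 (ultralimitFunctional U hτ x)) :=
  tendsto_nhds_limUnder (exists_tendsto_ultrafilter_apply U hτ x)

lemma ultralimitFunctional_eq_of_eventually {x : lp E ∞} {c : 𝕜}
    (h : ∀ᶠ i in U, τ i (x i) = c) : ultralimitFunctional U hτ x = c :=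
  tendsto_nhds_unique (tendsto_ultralimitFunctional U hτ x)
    (tendsto_const_nhds.congr' (EventuallyEq.symm h))

lemma ultralimitFunctional_congr {x y : lp E ∞} (h : ∀ᶠ i in U, τ i (x i) = τ i (y i)) :
    ultralimitFunctional U hτ x = ultralimitFunctional U hτ y :=
  tendsto_nhds_unique (tendsto_ultralimitFunctional U hτ x)
    ((tendsto_ultralimitFunctional U hτ y).congr' (EventuallyEq.symm h))

end lp

namespace lp

variable {ι : Type*} {A : ι → Type*} [∀ i, NormedRing (A i)] [∀ i, StarRing (A i)]
  [∀ i, CStarRing (A i)] [∀ i, Nontrivial (A i)]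

lemma memℓp_infty_of_forall_mem_unitary {u : ∀ i, A i} (hu : ∀ i, u i ∈ unitary (A i)) :
    Memℓp u ∞ :=
  memℓp_infty_iff.mpr ⟨1, by rintro _ ⟨i, rfl⟩; exact (CStarRing.norm_of_mem_unitary (hu i)).le⟩

lemma mem_unitary_of_forall {x : lp A ∞} (hx : ∀ i, x i ∈ unitary (A i)) :
    x ∈ unitary (lp A ∞) := by
  refine Unitary.mem_iff.mpr ⟨lp.ext (funext fun i => ?_), lp.ext (funext fun i => ?_)⟩
  · simpa using (Unitary.mem_iff.mp (hx i)).1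
  · simpa using (Unitary.mem_iff.mp (hx i)).2

end lp

namespace TracialCStarAlg

instance nontrivial (T : TracialCStarAlg) : Nontrivial T.carrier :=
  nontrivial_of_ne 1 0 fun h => one_ne_zero (by rw [← T.τ_one, h, map_zero])

lemma norm_τ_le (T : TracialCStarAlg) (a : T.carrier) : ‖T.τ a‖ ≤ (4 : ℝ≥0) * ‖a‖ := by
  simpa [T.τ_one] using norm_apply_le_of_map_star_mul_self_nonneg T.τ T.τ_pos a

/-- The `ℓ^∞`-product `B` with the tracial state `f_𝓕`. The paper passes to `B / 𝓘_𝓕` to make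
the trace faithful; a `TracialCStarAlg` need not be faithful, so `B` itself suffices. -/
noncomputable def ultralimit {ι : Type} (T : ι → TracialCStarAlg) (U : Ultrafilter ι) :
    TracialCStarAlg where
  carrier := lp (fun i => (T i).carrier) ∞
  τ := lp.ultralimitFunctional U fun i => (T i).norm_τ_le
  τ_one := lp.ultralimitFunctional_eq_of_eventually U _ <|
    .of_forall fun i => by simpa using (T i).τ_one
  τ_pos a := ge_of_tendsto (lp.tendsto_ultralimitFunctional U _ _) <|
    .of_forall fun i => by simpa using (T i).τ_pos (a i)
  τ_tracial a b := lp.ultralimitFunctional_congr U _ <|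
    .of_forall fun i => by simpa using (T i).τ_tracial (a i) (b i)

lemma ultralimit_τ_eq_of_eventually {ι : Type} {T : ι → TracialCStarAlg} {U : Ultrafilter ι}
    {x : lp (fun i => (T i).carrier) ∞} {c : ℂ} (h : ∀ᶠ i in U, (T i).τ (x i) = c) :
    (ultralimit T U).τ x = c :=
  lp.ultralimitFunctional_eq_of_eventually U (fun i => (T i).norm_τ_le) h

end TracialCStarAlg

theorem stmt15_general (I : Type) (m : I → I → ℂ)
    (A : Finset I → Type) [∀ F, NormedRing (A F)] [∀ F, StarRing (A F)]
    [∀ F, CStarRing (A F)] [∀ F, NormedAlgebra ℂ (A F)] [∀ F, CompleteSpace (A F)]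
    [∀ F, StarModule ℂ (A F)]
    (τ : ∀ F, A F →ₗ[ℂ] ℂ)
    (hτ1 : ∀ F, τ F 1 = 1)
    (hτpos : ∀ F, ∀ a : A F, 0 ≤ τ F (star a * a))
    (hτtr : ∀ F, ∀ a b : A F, τ F (a * b) = τ F (b * a))
    (d : ∀ F : Finset I, I → A F)
    (hd_unitary : ∀ F : Finset I, ∀ i ∈ F, d F i ∈ unitary (A F))
    (hd : ∀ F : Finset I, ∀ i ∈ F, ∀ j ∈ F, m i j = τ F (star (d F i) * d F j)) :
    ∃ (T : TracialCStarAlg) (e : I → T.carrier),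
      (∀ i, e i ∈ unitary T.carrier) ∧
      ∀ i j, m i j = T.τ (star (e i) * e j) := by
  classical
  let T : Finset I → TracialCStarAlg := fun F => ⟨A F, τ F, hτ1 F, hτpos F, hτtr F⟩
  -- needed for the ring structure on `lp`; instance search does not unfold `T F` to find it
  have : ∀ F, Nontrivial (A F) := fun F => (T F).nontrivial
  let u : I → ∀ F, (T F).carrier := fun i F => if i ∈ F then d F i else 1
  have hu : ∀ i F, u i F ∈ unitary (T F).carrier := fun i F => by
    by_cases hi : i ∈ F
    · simpa [u, hi] using hd_unitary F i hi
    · simp [u, hi]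
  let e : I → lp (fun F => (T F).carrier) ∞ := fun i =>
    ⟨u i, lp.memℓp_infty_of_forall_mem_unitary (hu i)⟩
  refine ⟨.ultralimit T (.of atTop), e, fun i => lp.mem_unitary_of_forall (hu i),
    fun i j => (TracialCStarAlg.ultralimit_τ_eq_of_eventually ?_).symm⟩
  filter_upwards [(eventually_ge_atTop {i, j}).filter_mono (Ultrafilter.of_le _)] with F hF
  have hi : i ∈ F := hF (Finset.mem_insert_self i {j})
  have hj : j ∈ F := hF (Finset.mem_insert_of_mem (Finset.mem_singleton_self j))
  change τ F (star (u i F) * u j F) = m i j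
  simp [u, hi, hj, hd F i hi j hj]

/-- If `(m i j)` is positive semi-definite with unit diagonal on each finite subset and
is realized on each finite `F ⊆ I` by unitaries in a finite-dimensional C*-algebra
with tracial state, then (via an ultraproduct over the finite subsets of `I`) there are
a C*-algebra with a tracial state `τ'` and unitaries `(d_i)_{i ∈ I}` with
`m i j = τ'(d_i^* d_j)` for all `i, j ∈ I`. -/
theorem stmt15 (I : Type) (m : I → I → ℂ)
    (hpsd : ∀ F : Finset I, ∀ c : I → ℂ,
      0 ≤ ∑ i ∈ F, ∑ j ∈ F, (starRingEnd ℂ) (c i) * c j * m i j)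
    (hdiag : ∀ i, m i i = 1)
    (A : Finset I → Type) [∀ F, NormedRing (A F)] [∀ F, StarRing (A F)]
    [∀ F, CStarRing (A F)] [∀ F, NormedAlgebra ℂ (A F)] [∀ F, CompleteSpace (A F)]
    [∀ F, StarModule ℂ (A F)] [∀ F, FiniteDimensional ℂ (A F)]
    (τ : ∀ F, A F →ₗ[ℂ] ℂ)
    (hτ1 : ∀ F, τ F 1 = 1)
    (hτpos : ∀ F, ∀ a : A F, 0 ≤ τ F (star a * a))
    (hτtr : ∀ F, ∀ a b : A F, τ F (a * b) = τ F (b * a))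
    (d : ∀ F : Finset I, I → A F)
    (hd_unitary : ∀ F : Finset I, ∀ i ∈ F, d F i ∈ unitary (A F))
    (hd : ∀ F : Finset I, ∀ i ∈ F, ∀ j ∈ F, m i j = τ F (star (d F i) * d F j)) :
    ∃ (T : TracialCStarAlg) (e : I → T.carrier),
      (∀ i, e i ∈ unitary T.carrier) ∧
      ∀ i j, m i j = T.τ (star (e i) * e j) :=
  stmt15_general I m A τ hτ1 hτpos hτtr d hd_unitary hd
end
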